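/- arXiv:2206.04340 — 5 statements merged into one kernel-verified Lean document; each statement's English description precedes it below -/
import Mathlib

section
/- Let ι = (0 = i₀ < ⋯ < i_N = 1) be a partition of [0,1], W a step graphon on ι with associated N×N matrix W_ι given by [W_ι]_{j₁j₂} = b_{j₁j₂}(i_{j₂} − i_{j₂-1}), and Δ_{W_ι} = diag(W_ι 𝟙) − W_ι its Laplacian. If u₀ ∈ 𝒫_ι, say u₀(x) = 1_ι(x)ᵀ u⃗₀ with u⃗₀ ∈ ℝ^N, then the function u(x,t) = 1_ι(x)ᵀ exp(−Δ_{W_ι} t) u⃗₀ satisfies u(·,t) ∈ 𝒫_ι for all t ≥ 0, u(x,0) = u₀(x), and ∂u/∂t(x,t) = ∫₀¹ W(x,y)(u(y,t) − u(x,t)) dy for all t ≥ 0 and x ∈ (0,1]. -/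
open MeasureTheory Matrix

noncomputable section

/-- The interval `(i_{j-1}, i_j]` of a partition `ι = (i₀, …, i_N)` of `[0,1]`. -/
def Iset {N : ℕ} (i : Fin (N + 1) → ℝ) (j : Fin N) : Set ℝ :=
  Set.Ioc (i j.castSucc) (i j.succ)

/-- The step graphon `W(x,y) = Σ_{j₁,j₂} b_{j₁j₂} 1_{(i_{j₁-1},i_{j₁}]}(x) 1_{(i_{j₂-1},i_{j₂}]}(y)`. -/
def stepGraphon {N : ℕ} (i : Fin (N + 1) → ℝ) (b : Matrix (Fin N) (Fin N) ℝ) :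
    ℝ → ℝ → ℝ := fun x y =>
  ∑ j₁ : Fin N, ∑ j₂ : Fin N,
    b j₁ j₂ * (Iset i j₁).indicator (fun _ => (1 : ℝ)) x *
      (Iset i j₂).indicator (fun _ => (1 : ℝ)) y

/-- The matrix `[W_ι]_{j₁j₂} = b_{j₁j₂}(i_{j₂} − i_{j₂-1})` of a step graphon. -/
def Wmat {N : ℕ} (i : Fin (N + 1) → ℝ) (b : Matrix (Fin N) (Fin N) ℝ) :
    Matrix (Fin N) (Fin N) ℝ :=
  Matrix.of fun j₁ j₂ => b j₁ j₂ * (i j₂.succ - i j₂.castSucc)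

/-- The Laplacian `Δ_A = diag(A𝟙) − A` of a square matrix. -/
def lap {N : ℕ} (A : Matrix (Fin N) (Fin N) ℝ) : Matrix (Fin N) (Fin N) ℝ :=
  Matrix.diagonal (A *ᵥ fun _ => (1 : ℝ)) - A

/-- The vector of indicators `1_ι(x) = (1_{(i_{j-1},i_j]}(x))_{j=1}^N`. -/
def oneι {N : ℕ} (i : Fin (N + 1) → ℝ) (x : ℝ) : Fin N → ℝ :=
  fun j => (Iset i j).indicator (fun _ => (1 : ℝ)) x

/-- `𝒫_ι`: step functions on the partition `ι`. -/
def PsetF {N : ℕ} (i : Fin (N + 1) → ℝ) : Set (ℝ → ℝ) :=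
  {u | ∃ a : Fin N → ℝ,
    u = fun x => ∑ j : Fin N, (Iset i j).indicator (fun _ => a j) x}

/-!
On each cell `Iset i k` of the partition both `W(x, ·)` and `u(·, t)` are constant. Hence for `x`
in the `j`-th cell, with `w = exp(-Δ t) u⃗₀`, the right-hand side of the evolution equation is
`∑ₖ b_{jk} |I_k| (w_k - w_j) = -(Δ_{W_ι} w)_j`, which is the `j`-th component of the derivative
`-Δ exp(-Δ t) u⃗₀`.
-/

-- A Banach-algebra norm on matrices, needed to differentiate `NormedSpace.exp`.
attribute [local instance] Matrix.linftyOpNormedRing Matrix.linftyOpNormedAlgebra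

section Partition

open Function

variable {N : ℕ} {i : Fin (N + 1) → ℝ}

theorem measurableSet_Iset (j : Fin N) : MeasurableSet (Iset i j) :=
  measurableSet_Ioc

theorem pairwise_disjoint_Iset (hmono : Monotone i) : Pairwise (Disjoint on Iset i) := by
  intro j k hjk
  rw [onFun, Iset, Iset]
  simpa only [onFun, Fin.orderSucc_castSucc] using
    hmono.pairwise_disjoint_on_Ioc_succ ((Fin.castSucc_injective N).ne hjk)

theorem Iset_subset_Ioc (hmono : Monotone i) (h0 : i 0 = 0) (h1 : i (Fin.last N) = 1)
    (j : Fin N) : Iset i j ⊆ Set.Ioc 0 1 := by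
  rw [← h0, ← h1]
  exact Set.Ioc_subset_Ioc (hmono (Fin.zero_le _)) (hmono (Fin.le_last _))

open Fin.NatCast in
theorem iUnion_Iset (hmono : Monotone i) (h0 : i 0 = 0) (h1 : i (Fin.last N) = 1) :
    ⋃ j, Iset i j = Set.Ioc 0 1 := by
  refine (Set.iUnion_subset (Iset_subset_Ioc hmono h0 h1)).antisymm ?_
  have h := Ioc_subset_biUnion_Ioc N (fun n => i (n : Fin (N + 1)))
  simp only [Nat.cast_zero, Fin.natCast_eq_last, h0, h1] at h
  refine h.trans (Set.iUnion₂_subset fun k hk => ?_)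
  have hk : k < N := Finset.mem_range.mp hk
  refine Set.subset_iUnion_of_subset ⟨k, hk⟩ (le_of_eq ?_)
  simp [Iset, Fin.natCast_eq_mk (hk.trans N.lt_succ_self),
    Fin.natCast_eq_mk (Nat.succ_lt_succ hk)]

theorem exists_mem_Iset (hmono : Monotone i) (h0 : i 0 = 0) (h1 : i (Fin.last N) = 1)
    {x : ℝ} (hx : x ∈ Set.Ioc 0 1) : ∃ j, x ∈ Iset i j :=
  Set.mem_iUnion.mp ((iUnion_Iset hmono h0 h1).symm ▸ hx)

theorem oneι_eq_single (hmono : StrictMono i) {x : ℝ} {j : Fin N} (hx : x ∈ Iset i j) :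
    oneι i x = Pi.single j 1 := by
  funext k
  by_cases hk : k = j
  · subst hk
    simp [oneι, hx]
  · have hxk : x ∉ Iset i k := fun h =>
      (pairwise_disjoint_Iset hmono.monotone hk).ne_of_mem h hx rfl
    simp [oneι, hxk, hk]

theorem oneι_dotProduct_of_mem (hmono : StrictMono i) {x : ℝ} {j : Fin N} (hx : x ∈ Iset i j)
    (a : Fin N → ℝ) : oneι i x ⬝ᵥ a = a j := by
  rw [oneι_eq_single hmono hx, single_one_dotProduct]

theorem dotProduct_oneι_mem_PsetF (a : Fin N → ℝ) : (fun x => oneι i x ⬝ᵥ a) ∈ PsetF i :=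
  ⟨a, funext fun x => Finset.sum_congr rfl fun j _ => by
    by_cases hx : x ∈ Iset i j <;> simp [oneι, hx]⟩

theorem stepGraphon_of_mem (hmono : StrictMono i) (b : Matrix (Fin N) (Fin N) ℝ) {x y : ℝ}
    {j k : Fin N} (hx : x ∈ Iset i j) (hy : y ∈ Iset i k) : stepGraphon i b x y = b j k := by
  have hx' := congrFun (oneι_eq_single hmono hx)
  have hy' := congrFun (oneι_eq_single hmono hy)
  simp only [oneι] at hx' hy'
  simp [stepGraphon, hx', hy', Pi.single_apply]

theorem setIntegral_Ioc_eq_sum_of_forall_mem_Iset (hmono : Monotone i) (h0 : i 0 = 0)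
    (h1 : i (Fin.last N) = 1) {f : ℝ → ℝ} (c : Fin N → ℝ)
    (hf : ∀ k, ∀ y ∈ Iset i k, f y = c k) :
    ∫ y in Set.Ioc 0 1, f y = ∑ k, c k * (i k.succ - i k.castSucc) := by
  have hconst : ∀ k, Set.EqOn (fun _ => c k) f (Iset i k) := fun k y hy => (hf k y hy).symm
  rw [← iUnion_Iset hmono h0 h1, integral_iUnion_fintype measurableSet_Iset
    (pairwise_disjoint_Iset hmono)
    fun k => (integrableOn_const measure_Ioc_lt_top.ne).congr_fun (hconst k) (measurableSet_Iset k)]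
  refine Finset.sum_congr rfl fun k _ => ?_
  rw [← setIntegral_congr_fun (measurableSet_Iset k) (hconst k), setIntegral_const, Iset,
    Real.volume_real_Ioc_of_le (hmono Fin.castSucc_lt_succ.le), smul_eq_mul, mul_comm]

end Partition

theorem Wmat_apply {N : ℕ} (i : Fin (N + 1) → ℝ) (b : Matrix (Fin N) (Fin N) ℝ) (j k : Fin N) :
    Wmat i b j k = b j k * (i k.succ - i k.castSucc) :=
  rfl

theorem neg_lap_mulVec_apply {N : ℕ} (A : Matrix (Fin N) (Fin N) ℝ) (w : Fin N → ℝ)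
    (j : Fin N) : -(lap A *ᵥ w) j = ∑ k, A j k * (w k - w j) := by
  rw [lap, sub_mulVec, Pi.sub_apply, mulVec_diagonal, neg_sub]
  simp [mulVec, dotProduct, mul_sub, Finset.sum_mul]

theorem hasDerivAt_exp_neg_smul_mulVec_apply {n : Type*} [Fintype n] [DecidableEq n]
    (L : Matrix n n ℝ) (v : n → ℝ) (j : n) (t : ℝ) :
    HasDerivAt (fun s : ℝ => (NormedSpace.exp ((-s) • L) *ᵥ v) j)
      (-(L *ᵥ (NormedSpace.exp ((-t) • L) *ᵥ v)) j) t := by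
  let evalMulVec : Matrix n n ℝ →L[ℝ] ℝ := LinearMap.toContinuousLinearMap
    (LinearMap.proj j ∘ₗ LinearMap.applyₗ v ∘ₗ Matrix.toLin'.toLinearMap)
  have h := evalMulVec.hasFDerivAt.comp_hasDerivAt t (hasDerivAt_exp_smul_const' (-L) t)
  have evalMulVec_apply (M : Matrix n n ℝ) : evalMulVec M = (M *ᵥ v) j := rfl
  simp only [Function.comp_def, smul_neg, ← neg_smul, evalMulVec_apply] at h
  refine h.congr_deriv ?_
  change ((-L * NormedSpace.exp ((-t) • L)) *ᵥ v) j = _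
  rw [neg_mul, neg_mulVec, ← mulVec_mulVec, Pi.neg_apply]

theorem stmt6_general (N : ℕ) (i : Fin (N + 1) → ℝ) (hmono : StrictMono i)
    (h0 : i 0 = 0) (h1 : i (Fin.last N) = 1) (b : Matrix (Fin N) (Fin N) ℝ)
    (u0 : Fin N → ℝ) (u₀ : ℝ → ℝ) (hu₀ : u₀ = fun x => oneι i x ⬝ᵥ u0)
    (u : ℝ → ℝ → ℝ)
    (hu : u = fun x t => oneι i x ⬝ᵥ (NormedSpace.exp ((-t) • lap (Wmat i b)) *ᵥ u0)) :
    (∀ t : ℝ, 0 ≤ t → (fun x => u x t) ∈ PsetF i) ∧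
    (∀ x, u x 0 = u₀ x) ∧
    (∀ t : ℝ, 0 ≤ t → ∀ x ∈ Set.Ioc (0 : ℝ) 1,
      HasDerivAt (fun s => u x s)
        (∫ y in Set.Ioc (0 : ℝ) 1, stepGraphon i b x y * (u y t - u x t)) t) := by
  subst hu hu₀
  refine ⟨fun t _ => dotProduct_oneι_mem_PsetF _, fun x => by simp, fun t _ x hx => ?_⟩
  obtain ⟨j, hj⟩ := exists_mem_Iset hmono.monotone h0 h1 hx
  simp only [oneι_dotProduct_of_mem hmono hj]
  set w := NormedSpace.exp ((-t) • lap (Wmat i b)) *ᵥ u0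
  have hint : ∫ y in Set.Ioc (0 : ℝ) 1, stepGraphon i b x y * (oneι i y ⬝ᵥ w - w j) =
      ∑ k, b j k * (w k - w j) * (i k.succ - i k.castSucc) :=
    setIntegral_Ioc_eq_sum_of_forall_mem_Iset hmono.monotone h0 h1 _ fun k y hy => by
      rw [stepGraphon_of_mem hmono b hj hy, oneι_dotProduct_of_mem hmono hy]
  rw [hint]
  refine (hasDerivAt_exp_neg_smul_mulVec_apply _ u0 j t).congr_deriv ?_
  rw [neg_lap_mulVec_apply]
  exact Finset.sum_congr rfl fun k _ => by rw [Wmat_apply]; ring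

/-- If `u₀ = 1_ιᵀ u⃗₀ ∈ 𝒫_ι`, then `u(x,t) = 1_ι(x)ᵀ exp(−Δ_{W_ι} t) u⃗₀`
satisfies `u(·,t) ∈ 𝒫_ι` for all `t ≥ 0`, `u(x,0) = u₀(x)`, and the graphon evolution
equation `∂u/∂t(x,t) = ∫₀¹ W(x,y)(u(y,t) − u(x,t)) dy` for all `t ≥ 0` and `x ∈ (0,1]`. -/
theorem stmt6 (N : ℕ) (hN : 0 < N) (i : Fin (N + 1) → ℝ) (hmono : StrictMono i)
    (h0 : i 0 = 0) (h1 : i (Fin.last N) = 1) (b : Matrix (Fin N) (Fin N) ℝ)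
    (u0 : Fin N → ℝ) (u₀ : ℝ → ℝ) (hu₀ : u₀ = fun x => oneι i x ⬝ᵥ u0)
    (u : ℝ → ℝ → ℝ)
    (hu : u = fun x t => oneι i x ⬝ᵥ (NormedSpace.exp ((-t) • lap (Wmat i b)) *ᵥ u0)) :
    (∀ t : ℝ, 0 ≤ t → (fun x => u x t) ∈ PsetF i) ∧
    (∀ x, u x 0 = u₀ x) ∧
    (∀ t : ℝ, 0 ≤ t → ∀ x ∈ Set.Ioc (0 : ℝ) 1,
      HasDerivAt (fun s => u x s)
        (∫ y in Set.Ioc (0 : ℝ) 1, stepGraphon i b x y * (u y t - u x t)) t) :=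
  stmt6_general N i hmono h0 h1 b u0 u₀ hu₀ u hu
end
end

section
/- Let ι = (0 = i₀ < ⋯ < i_N = 1) be a partition of [0,1], W a step graphon on ι with matrix W_ι, and fix j ∈ {1, …, N}. If u₀ ∈ L²₀((i_{j-1}, i_j]) (i.e., u₀ vanishes outside (i_{j-1}, i_j] and ∫ u₀ = 0), then the function u(x,t) = u₀(x) exp(−μ t), where μ = (W_ι 𝟙)_j = Σ_{j₂=1}^N b_{j j₂}(i_{j₂} − i_{j₂-1}), satisfies u(·,t) ∈ L²₀((i_{j-1}, i_j]) for all t ≥ 0, u(x,0) = u₀(x), and ∂u/∂t(x,t) = ∫₀¹ W(x,y)(u(y,t) − u(x,t)) dy for almost every x ∈ [0,1] and all t ≥ 0. -/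
/-!
For `x` in the `j`-th cell, `W(x, ·)` equals `b_{j j₂}` on the `j₂`-th cell, so
`∫ W(x,y) (v y - v x) dy = Σ_{j₂} b_{j j₂} (∫_{cell j₂} v - |cell j₂| v x)`.
A function of `L²₀((i_{j-1}, i_j])` has zero integral over every cell, so the right side is
`-μ v x`; outside the `j`-th cell both sides vanish. As `L²₀` is closed under scaling,
`u₀ e^{-μt}` solves `∂ₜu = -μ u`, which is then the evolution equation.
-/

open MeasureTheory

noncomputable section

/-- The Lebesgue measure on the unit interval `(0,1]`, modelling `[0,1]`. -/
def μ01 : Measure ℝ := volume.restrict (Set.Ioc 0 1)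

/-- `L²₀(I)`: functions `u ∈ L²([0,1])` with `u = u·1_I` and `∫_I u = 0`. -/
def L20F (I : Set ℝ) : Set (ℝ → ℝ) :=
  {u | MemLp u 2 μ01 ∧ (∀ x, x ∉ I → u x = 0) ∧ ∫ x in I, u x = 0}

instance : IsFiniteMeasure μ01 := by
  unfold μ01; infer_instance

namespace Iset

variable {N : ℕ} {i : Fin (N + 1) → ℝ}

theorem measurableSet (k : Fin N) : MeasurableSet (Iset i k) := measurableSet_Ioc

theorem subset_Ioc (hi : Monotone i) (h0 : i 0 = 0) (h1 : i (Fin.last N) = 1) (k : Fin N) :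
    Iset i k ⊆ Set.Ioc 0 1 := by
  apply Set.Ioc_subset_Ioc
  · rw [← h0]; exact hi (Fin.zero_le _)
  · rw [← h1]; exact hi (Fin.le_last _)

open Function in
theorem pairwise_disjoint (hi : Monotone i) : Pairwise (Disjoint on Iset i) := by
  have hlt : ∀ k l : Fin N, k < l → Disjoint (Iset i k) (Iset i l) := fun k l hkl =>
    Set.Ioc_disjoint_Ioc_of_le (hi (Fin.succ_le_castSucc_iff.mpr hkl))
  intro k l hkl
  rcases hkl.lt_or_gt with h | h
  · exact hlt k l h
  · exact (hlt l k h).symm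

theorem volume_real (hi : Monotone i) (k : Fin N) :
    volume.real (Iset i k) = i k.succ - i k.castSucc :=
  Real.volume_real_Ioc_of_le (hi Fin.castSucc_lt_succ.le)

theorem indicator_one_apply_of_mem (hi : Monotone i) {j : Fin N} {x : ℝ} (hx : x ∈ Iset i j)
    (k : Fin N) : (Iset i k).indicator (fun _ => (1 : ℝ)) x = if k = j then 1 else 0 := by
  split_ifs with hkj
  · rw [hkj, Set.indicator_of_mem hx]
  · exact Set.indicator_of_notMem (Set.disjoint_right.mp (pairwise_disjoint hi hkj) hx) _

end Iset

theorem mul_const_mem_L20F {I : Set ℝ} {v : ℝ → ℝ} (hv : v ∈ L20F I) (c : ℝ) :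
    (fun x => v x * c) ∈ L20F I := by
  obtain ⟨hmem, hout, hint⟩ := hv
  refine ⟨hmem.mul_const c, fun x hx => by simp [hout x hx], ?_⟩
  rw [integral_mul_const, hint, zero_mul]

theorem setIntegral_Iset_eq_zero_of_mem_L20F {N : ℕ} {i : Fin (N + 1) → ℝ} (hi : Monotone i)
    {j : Fin N} {v : ℝ → ℝ} (hv : v ∈ L20F (Iset i j)) (k : Fin N) :
    ∫ y in Iset i k, v y = 0 := by
  obtain ⟨-, hout, hint⟩ := hv
  by_cases hkj : k = j
  · rwa [hkj]
  · exact setIntegral_eq_zero_of_forall_eq_zero fun y hy =>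
      hout y (Set.disjoint_left.mp (Iset.pairwise_disjoint hi hkj) hy)

section StepGraphon

variable {N : ℕ} {i : Fin (N + 1) → ℝ}

theorem integral_stepGraphon_mul (hi : Monotone i) (h0 : i 0 = 0)
    (h1 : i (Fin.last N) = 1) (b : Matrix (Fin N) (Fin N) ℝ) (x : ℝ) {v : ℝ → ℝ}
    (hv : IntegrableOn v (Set.Ioc 0 1)) :
    ∫ y in Set.Ioc 0 1, stepGraphon i b x y * v y =
      ∑ j₁, ∑ j₂, b j₁ j₂ * (Iset i j₁).indicator (fun _ => (1 : ℝ)) x *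
        ∫ y in Iset i j₂, v y := by
  have hW : ∀ y, stepGraphon i b x y * v y =
      ∑ j₁, ∑ j₂, b j₁ j₂ * (Iset i j₁).indicator (fun _ => (1 : ℝ)) x *
        (Iset i j₂).indicator v y := by
    intro y
    simp only [stepGraphon, Finset.sum_mul, mul_assoc, ← Set.indicator_mul_left, one_mul]
  have hcell : ∀ k, ∫ y in Set.Ioc 0 1, (Iset i k).indicator v y = ∫ y in Iset i k, v y := by
    intro k
    rw [integral_indicator (Iset.measurableSet k),
      Measure.restrict_restrict (Iset.measurableSet k),
      Set.inter_eq_self_of_subset_left (Iset.subset_Ioc hi h0 h1 k)]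
  have hint : ∀ k, Integrable ((Iset i k).indicator v) (volume.restrict (Set.Ioc 0 1)) :=
    fun k => hv.integrable.indicator (Iset.measurableSet k)
  simp_rw [hW]
  rw [integral_finsetSum _ fun j₁ _ => integrable_finsetSum _ fun j₂ _ =>
    (hint j₂).const_mul _]
  refine Finset.sum_congr rfl fun j₁ _ => ?_
  rw [integral_finsetSum _ fun j₂ _ => (hint j₂).const_mul _]
  refine Finset.sum_congr rfl fun j₂ _ => ?_
  rw [integral_const_mul, hcell]

theorem integral_stepGraphon_mul_sub_of_mem_L20F (hi : Monotone i) (h0 : i 0 = 0)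
    (h1 : i (Fin.last N) = 1) (b : Matrix (Fin N) (Fin N) ℝ) {j : Fin N} {v : ℝ → ℝ}
    (hv : v ∈ L20F (Iset i j)) (x : ℝ) :
    ∫ y in Set.Ioc 0 1, stepGraphon i b x y * (v y - v x) =
      -(∑ j₂, b j j₂ * (i j₂.succ - i j₂.castSucc)) * v x := by
  have hvint : IntegrableOn v (Set.Ioc 0 1) := hv.1.integrable one_le_two
  have hcell : ∀ k, ∫ y in Iset i k, (v y - v x) = -((i k.succ - i k.castSucc) * v x) := by
    intro k
    have hvk : IntegrableOn v (Iset i k) := hvint.mono_set (Iset.subset_Ioc hi h0 h1 k)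
    rw [integral_sub hvk (integrableOn_const measure_Ioc_lt_top.ne),
      setIntegral_Iset_eq_zero_of_mem_L20F hi hv k, setIntegral_const, Iset.volume_real hi,
      smul_eq_mul, zero_sub]
  have hsub : IntegrableOn (fun y => v y - v x) (Set.Ioc 0 1) :=
    hvint.sub (integrableOn_const measure_Ioc_lt_top.ne)
  simp only [integral_stepGraphon_mul hi h0 h1 b x hsub, hcell]
  by_cases hx : x ∈ Iset i j
  · rw [Fintype.sum_eq_single j fun k hk => by simp [Iset.indicator_one_apply_of_mem hi hx, hk],
      Set.indicator_of_mem hx, neg_mul, Finset.sum_mul, ← Finset.sum_neg_distrib]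
    exact Finset.sum_congr rfl fun k _ => by ring
  · simp [hv.2.1 x hx]

end StepGraphon

theorem stmt7_general (N : ℕ) (i : Fin (N + 1) → ℝ) (hmono : StrictMono i)
    (h0 : i 0 = 0) (h1 : i (Fin.last N) = 1) (b : Matrix (Fin N) (Fin N) ℝ)
    (j : Fin N) (u₀ : ℝ → ℝ) (hu₀ : u₀ ∈ L20F (Iset i j))
    (μ : ℝ) (hμ : μ = ∑ j₂ : Fin N, b j j₂ * (i j₂.succ - i j₂.castSucc))
    (u : ℝ → ℝ → ℝ) (hu : u = fun x t => u₀ x * Real.exp (-μ * t)) :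
    (∀ t : ℝ, 0 ≤ t → (fun x => u x t) ∈ L20F (Iset i j)) ∧
    (∀ x, u x 0 = u₀ x) ∧
    (∀ᵐ x ∂μ01, ∀ t : ℝ, 0 ≤ t →
      HasDerivAt (fun s => u x s)
        (∫ y in Set.Ioc (0 : ℝ) 1, stepGraphon i b x y * (u y t - u x t)) t) := by
  subst hu
  have hmem : ∀ t : ℝ, (fun x => u₀ x * Real.exp (-μ * t)) ∈ L20F (Iset i j) :=
    fun t => mul_const_mem_L20F hu₀ _
  refine ⟨fun t _ => hmem t, fun x => by simp, Filter.Eventually.of_forall fun x t _ => ?_⟩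
  rw [integral_stepGraphon_mul_sub_of_mem_L20F hmono.monotone h0 h1 b (hmem t) x, ← hμ]
  exact ((((hasDerivAt_id' t).const_mul (-μ)).exp).const_mul (u₀ x)).congr_deriv (by ring)

/-- If `u₀ ∈ L²₀((i_{j-1}, i_j])`, then `u(x,t) = u₀(x) exp(−μt)` with
`μ = (W_ι 𝟙)_j = Σ_{j₂} b_{j j₂}(i_{j₂} − i_{j₂-1})` satisfies `u(·,t) ∈ L²₀((i_{j-1}, i_j])`
for all `t ≥ 0`, `u(x,0) = u₀(x)`, and the graphon evolution equation for a.e. `x ∈ [0,1]`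
and all `t ≥ 0`. -/
theorem stmt7 (N : ℕ) (hN : 0 < N) (i : Fin (N + 1) → ℝ) (hmono : StrictMono i)
    (h0 : i 0 = 0) (h1 : i (Fin.last N) = 1) (b : Matrix (Fin N) (Fin N) ℝ)
    (j : Fin N) (u₀ : ℝ → ℝ) (hu₀ : u₀ ∈ L20F (Iset i j))
    (μ : ℝ) (hμ : μ = ∑ j₂ : Fin N, b j j₂ * (i j₂.succ - i j₂.castSucc))
    (u : ℝ → ℝ → ℝ) (hu : u = fun x t => u₀ x * Real.exp (-μ * t)) :
    (∀ t : ℝ, 0 ≤ t → (fun x => u x t) ∈ L20F (Iset i j)) ∧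
    (∀ x, u x 0 = u₀ x) ∧
    (∀ᵐ x ∂μ01, ∀ t : ℝ, 0 ≤ t →
      HasDerivAt (fun s => u x s)
        (∫ y in Set.Ioc (0 : ℝ) 1, stepGraphon i b x y * (u y t - u x t)) t) :=
  stmt7_general N i hmono h0 h1 b j u₀ hu₀ μ hμ u hu
end
end

section
/- Let a₁₂, a₂₃ ≥ 0 with a₁₂ + a₂₃ > 0, let a₁₃ ∈ ℝ, and set Δ = √((a₁₂−a₁₃)² + (a₁₂−a₂₃)² + (a₁₃−a₂₃)²)/√2 and λ₃ = a₁₂ + a₁₃ + a₂₃ − Δ. Then: λ₃ > 0 if and only if a₁₃ > −a₁₂a₂₃/(a₁₂+a₂₃); λ₃ = 0 if and only if a₁₃ = −a₁₂a₂₃/(a₁₂+a₂₃); and λ₃ < 0 if and only if a₁₃ < −a₁₂a₂₃/(a₁₂+a₂₃). -/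
/-!
Write `S = a₁₂ + a₁₃ + a₂₃`, `s = a₁₂ + a₂₃ > 0` and `t = -a₁₂a₂₃/s`. Expanding `Δ²` gives
`S² - Δ² = 3(a₁₂a₁₃ + a₁₂a₂₃ + a₁₃a₂₃) = 3s(a₁₃ - t)`. Moreover `S + Δ > 0`: if `a₁₃ ≥ t`
then `sS ≥ a₁₂² + a₁₂a₂₃ + a₂₃² > 0`, and otherwise `Δ² > S²`. Hence `λ₃ = S - Δ` has the
sign of `S² - Δ²`, that is, of `a₁₃ - t`.
-/

theorem cmp_sq_sq_of_add_pos {R : Type*} [CommRing R] [LinearOrder R] [IsStrictOrderedRing R]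
    {x y : R} (h : 0 < x + y) : cmp (x ^ 2) (y ^ 2) = cmp x y := by
  rw [← cmp_sub_zero, sq_sub_sq, ← mul_zero (x + y), cmp_mul_pos_left h, cmp_sub_zero]

theorem mul_add_mul_add_mul_eq_mul_sub {K : Type*} [Field K] {a b c : K} (h : a + c ≠ 0) :
    a * b + a * c + b * c = (a + c) * (b - -(a * c) / (a + c)) := by
  field_simp
  ring

theorem add_add_pos_of_neg_mul_div_le {K : Type*} [Field K] [LinearOrder K]
    [IsStrictOrderedRing K] {a b c : K} (h : 0 < a + c) (hb : -(a * c) / (a + c) ≤ b) :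
    0 < a + b + c := by
  have hmul : -(a * c) ≤ (a + c) * b := by rwa [div_le_iff₀' h] at hb
  have hsq : 0 < a ^ 2 + a * c + c ^ 2 := by nlinarith [sq_nonneg (a - c), sq_nonneg (a + c)]
  refine pos_of_mul_pos_right (a := a + c) ?_ h.le
  nlinarith

/-- The paper's `Δ`: `λ₃ = a₁₂ + a₁₃ + a₂₃ - delta3 a₁₂ a₁₃ a₂₃`. -/
noncomputable def delta3 (a b c : ℝ) : ℝ :=
  √((a - b) ^ 2 + (a - c) ^ 2 + (b - c) ^ 2) / √2

theorem delta3_nonneg (a b c : ℝ) : 0 ≤ delta3 a b c := by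
  unfold delta3
  positivity

theorem sq_add_add_sub_sq_delta3 (a b c : ℝ) :
    (a + b + c) ^ 2 - delta3 a b c ^ 2 = 3 * (a * b + a * c + b * c) := by
  rw [delta3, div_pow, Real.sq_sqrt (by positivity), Real.sq_sqrt zero_le_two]
  ring

theorem add_add_add_delta3_pos {a b c : ℝ} (h : 0 < a + c) : 0 < a + b + c + delta3 a b c := by
  rcases le_or_gt (-(a * c) / (a + c)) b with hb | hb
  · linarith [add_add_pos_of_neg_mul_div_le h hb, delta3_nonneg a b c]
  · have hlt : (a + b + c) ^ 2 < delta3 a b c ^ 2 := by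
      have hneg : (a + c) * (b - -(a * c) / (a + c)) < 0 :=
        mul_neg_of_pos_of_neg h (sub_neg.2 hb)
      linarith [sq_add_add_sub_sq_delta3 a b c, mul_add_mul_add_mul_eq_mul_sub (b := b) h.ne']
    linarith [(abs_lt_of_sq_lt_sq' hlt (delta3_nonneg a b c)).1]

theorem cmp_add_add_sub_delta3 {a b c : ℝ} (h : 0 < a + c) :
    cmp (a + b + c - delta3 a b c) 0 = cmp b (-(a * c) / (a + c)) := by
  have h3s : (0 : ℝ) < 3 * (a + c) := by positivity
  calc cmp (a + b + c - delta3 a b c) 0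
      = cmp ((a + b + c) ^ 2) (delta3 a b c ^ 2) := by
        rw [cmp_sub_zero, cmp_sq_sq_of_add_pos (add_add_add_delta3_pos h)]
    _ = cmp (3 * (a + c) * (b - -(a * c) / (a + c))) (3 * (a + c) * 0) := by
        rw [← cmp_sub_zero, sq_add_add_sub_sq_delta3, mul_add_mul_add_mul_eq_mul_sub h.ne',
          mul_zero, mul_assoc]
    _ = cmp b (-(a * c) / (a + c)) := by rw [cmp_mul_pos_left h3s, cmp_sub_zero]

theorem stmt13_general (a12 a13 a23 : ℝ)
    (hpos : 0 < a12 + a23)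
    (Δ : ℝ)
    (hΔ : Δ = Real.sqrt ((a12 - a13) ^ 2 + (a12 - a23) ^ 2 + (a13 - a23) ^ 2) /
      Real.sqrt 2) :
    (0 < a12 + a13 + a23 - Δ ↔ -(a12 * a23) / (a12 + a23) < a13) ∧
    (a12 + a13 + a23 - Δ = 0 ↔ a13 = -(a12 * a23) / (a12 + a23)) ∧
    (a12 + a13 + a23 - Δ < 0 ↔ a13 < -(a12 * a23) / (a12 + a23)) := by
  have hcmp : cmp (a12 + a13 + a23 - Δ) 0 = cmp a13 (-(a12 * a23) / (a12 + a23)) :=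
    hΔ ▸ cmp_add_add_sub_delta3 hpos
  exact ⟨lt_iff_lt_of_cmp_eq_cmp (cmp_eq_cmp_symm.1 hcmp), eq_iff_eq_of_cmp_eq_cmp hcmp,
    lt_iff_lt_of_cmp_eq_cmp hcmp⟩

/-- If `a₁₂, a₂₃ ≥ 0`, `a₁₂ + a₂₃ > 0`, and
`Δ = √((a₁₂−a₁₃)² + (a₁₂−a₂₃)² + (a₁₃−a₂₃)²)/√2`, then the eigenvalue
`λ₃ = a₁₂+a₁₃+a₂₃−Δ` is positive iff `a₁₃ > −a₁₂a₂₃/(a₁₂+a₂₃)`, zero iff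
`a₁₃ = −a₁₂a₂₃/(a₁₂+a₂₃)`, and negative iff `a₁₃ < −a₁₂a₂₃/(a₁₂+a₂₃)`. -/
theorem stmt13 (a12 a13 a23 : ℝ) (h12 : 0 ≤ a12) (h23 : 0 ≤ a23)
    (hpos : 0 < a12 + a23)
    (Δ : ℝ)
    (hΔ : Δ = Real.sqrt ((a12 - a13) ^ 2 + (a12 - a23) ^ 2 + (a13 - a23) ^ 2) /
      Real.sqrt 2) :
    (0 < a12 + a13 + a23 - Δ ↔ -(a12 * a23) / (a12 + a23) < a13) ∧
    (a12 + a13 + a23 - Δ = 0 ↔ a13 = -(a12 * a23) / (a12 + a23)) ∧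
    (a12 + a13 + a23 - Δ < 0 ↔ a13 < -(a12 * a23) / (a12 + a23)) :=
  stmt13_general a12 a13 a23 hpos Δ hΔ
end

section
/- Let a₁₂, a₂₃ ≥ 0 with a₁₂ + a₂₃ > 0 and a₁₃ > −a₁₂a₂₃/(a₁₂+a₂₃), let Δ_W be the 3×3 Laplacian with rows (a₁₂+a₁₃, −a₁₂, −a₁₃), (−a₁₂, a₂₃+a₁₂, −a₂₃), (−a₁₃, −a₂₃, a₁₃+a₂₃), and let u⃗(t) = exp(−Δ_W t) u⃗₀ for u⃗₀ ∈ ℝ³. Then as t → ∞, u⃗(t) converges to b(0)·𝟙, where b(0) = (1/3) 𝟙ᵀ u⃗₀; i.e., the barycenters of all three groups collapse to the common barycenter of the initial condition. -/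
/-!
`Δ_W` is symmetric and, with `p = x₀ - x₁`, `q = x₁ - x₂`,
`(a₁₂ + a₂₃) ⟪x, Δ_W x⟫ = (a₁₂ p - a₂₃ q)² + (a₁₂a₁₃ + a₁₂a₂₃ + a₁₃a₂₃) (p + q)²`.
The hypothesis on `a₁₃` says exactly that the weighted spanning-tree count
`a₁₂a₁₃ + a₁₂a₂₃ + a₁₃a₂₃` is positive, so `Δ_W` is positive semidefinite with kernel the
constant vectors. Diagonalizing, `exp (-tΔ_W) = U diag (e^{-tλᵢ}) Uᵀ` converges to the orthogonal
projection onto `ker Δ_W`, which sends `u₀` to its mean times `𝟙`.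
-/

open Matrix Filter Topology

namespace Matrix.IsHermitian

variable {n : Type*} [Fintype n] [DecidableEq n] {A : Matrix n n ℝ} (hA : A.IsHermitian)

local notation "U" => (hA.eigenvectorUnitary : Matrix n n ℝ)

lemma exp_smul_eq (s : ℝ) :
    NormedSpace.exp (s • A) =
      U * diagonal (fun i => Real.exp (s * hA.eigenvalues i)) * star U := by
  have hU : IsUnit U := (Unitary.toUnits hA.eigenvectorUnitary).isUnit
  have hinv : U⁻¹ = star U := inv_eq_left_inv (Unitary.coe_star_mul_self _)
  conv_lhs => rw [hA.spectral_theorem, Unitary.conjStarAlgAut_apply]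
  rw [← hinv, ← Matrix.smul_mul, ← Matrix.mul_smul, ← diagonal_smul, Matrix.exp_conj _ _ hU,
    exp_diagonal, Pi.exp_def]
  simp [Real.exp_eq_exp_ℝ]

lemma star_eigenvectorUnitary_mul_eq_diagonal_mul : star U * A = diagonal hA.eigenvalues * star U := by
  conv_lhs => arg 2; rw [hA.spectral_theorem, Unitary.conjStarAlgAut_apply]
  rw [← mul_assoc, ← mul_assoc, Unitary.coe_star_mul_self, one_mul]
  simp

lemma star_eigenvectorUnitary_mulVec_apply (w : n → ℝ) (i : n) :
    (star U *ᵥ w) i = ⇑(hA.eigenvectorBasis i) ⬝ᵥ w := by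
  simp [mulVec, dotProduct, star_apply]

lemma star_eigenvectorUnitary_mulVec_apply_eq_zero {y : n → ℝ} (hy : A *ᵥ y = 0) {i : n}
    (hi : hA.eigenvalues i ≠ 0) : (star U *ᵥ y) i = 0 := by
  have h := congrFun (congrArg (· *ᵥ y) hA.star_eigenvectorUnitary_mul_eq_diagonal_mul) i
  simp only [← mulVec_mulVec, hy, mulVec_zero, mulVec_diagonal, Pi.zero_apply] at h
  exact (mul_eq_zero.mp h.symm).resolve_left hi

end Matrix.IsHermitian

namespace Matrix.PosSemidef

variable {n : Type*} [Fintype n] [DecidableEq n] {A : Matrix n n ℝ}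

lemma tendsto_exp_neg_smul (hA : A.PosSemidef) :
    Tendsto (fun t : ℝ => NormedSpace.exp ((-t) • A)) atTop
      -- the orthogonal projection onto `ker A`
      (𝓝 ((hA.isHermitian.eigenvectorUnitary : Matrix n n ℝ) *
        diagonal (fun i => if hA.isHermitian.eigenvalues i = 0 then 1 else 0) *
        star (hA.isHermitian.eigenvectorUnitary : Matrix n n ℝ))) := by
  have hexp : ∀ i, Tendsto (fun t : ℝ => Real.exp (-t * hA.isHermitian.eigenvalues i)) atTop
      (𝓝 (if hA.isHermitian.eigenvalues i = 0 then 1 else 0)) := by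
    intro i
    by_cases h : hA.isHermitian.eigenvalues i = 0
    · simp [h]
    · have hpos : 0 < hA.isHermitian.eigenvalues i := (hA.eigenvalues_nonneg i).lt_of_ne' h
      rw [if_neg h]
      exact Real.tendsto_exp_atBot.comp (tendsto_neg_atTop_atBot.atBot_mul_const hpos)
  have hdiag := (continuous_id.matrix_diagonal.tendsto _).comp (tendsto_pi_nhds.mpr hexp)
  simp_rw [hA.isHermitian.exp_smul_eq]
  exact ((continuous_const.matrix_mul continuous_id).matrix_mul continuous_const).tendsto _
    |>.comp hdiag

theorem tendsto_exp_neg_smul_mulVec (hA : A.PosSemidef) {y w : n → ℝ} (hy : A *ᵥ y = 0)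
    (hw : ∀ x, A *ᵥ x = 0 → x ⬝ᵥ w = 0) :
    Tendsto (fun t : ℝ => NormedSpace.exp ((-t) • A) *ᵥ (y + w)) atTop (𝓝 y) := by
  have hH := hA.isHermitian
  have hP : diagonal (fun i => if hH.eigenvalues i = 0 then 1 else 0) *ᵥ
      (star (hH.eigenvectorUnitary : Matrix n n ℝ) *ᵥ (y + w)) =
      star (hH.eigenvectorUnitary : Matrix n n ℝ) *ᵥ y := by
    ext i
    rw [mulVec_diagonal, mulVec_add, Pi.add_apply]
    split_ifs with h
    · have hker : A *ᵥ ⇑(hH.eigenvectorBasis i) = 0 := by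
        rw [hH.mulVec_eigenvectorBasis, h, zero_smul]
      rw [hH.star_eigenvectorUnitary_mulVec_apply w, hw _ hker, one_mul, add_zero]
    · rw [hH.star_eigenvectorUnitary_mulVec_apply_eq_zero hy h, zero_mul]
  have hlim := ((continuous_id.matrix_mulVec (continuous_const (y := y + w))).tendsto _).comp
    hA.tendsto_exp_neg_smul
  rwa [id, ← mulVec_mulVec, ← mulVec_mulVec, hP, mulVec_mulVec, Unitary.mul_star_self_of_mem
    (Subtype.prop _), one_mulVec] at hlim

end Matrix.PosSemidef

def triangleLaplacian (a12 a13 a23 : ℝ) : Matrix (Fin 3) (Fin 3) ℝ :=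
  !![a12 + a13, -a12, -a13;
     -a12, a23 + a12, -a23;
     -a13, -a23, a13 + a23]

lemma triangleLaplacian_isHermitian (a12 a13 a23 : ℝ) :
    (triangleLaplacian a12 a13 a23).IsHermitian := by
  ext i j
  fin_cases i <;> fin_cases j <;> simp [triangleLaplacian]

lemma triangleLaplacian_mulVec_const (a12 a13 a23 c : ℝ) :
    triangleLaplacian a12 a13 a23 *ᵥ (fun _ => c) = 0 := by
  ext i
  fin_cases i <;> simp [triangleLaplacian, mulVec, dotProduct, Fin.sum_univ_three] <;> ring

lemma mul_dotProduct_triangleLaplacian_mulVec (a12 a13 a23 : ℝ) (x : Fin 3 → ℝ) :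
    (a12 + a23) * (x ⬝ᵥ (triangleLaplacian a12 a13 a23 *ᵥ x)) =
      (a12 * (x 0 - x 1) - a23 * (x 1 - x 2)) ^ 2 +
        (a12 * a13 + a12 * a23 + a13 * a23) * (x 0 - x 2) ^ 2 := by
  simp only [dotProduct, mulVec, triangleLaplacian, of_apply, cons_val', cons_val_fin_one,
    Fin.sum_univ_three, Fin.isValue, cons_val_zero, cons_val_one, cons_val, neg_mul]
  ring

lemma triangleLaplacian_posSemidef {a12 a13 a23 : ℝ} (hpos : 0 < a12 + a23)
    (htree : 0 ≤ a12 * a13 + a12 * a23 + a13 * a23) :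
    (triangleLaplacian a12 a13 a23).PosSemidef := by
  refine posSemidef_iff_dotProduct_mulVec.mpr ⟨triangleLaplacian_isHermitian _ _ _, fun x => ?_⟩
  rw [star_trivial]
  refine nonneg_of_mul_nonneg_right ?_ hpos
  rw [mul_dotProduct_triangleLaplacian_mulVec]
  positivity

lemma eq_const_of_triangleLaplacian_mulVec_eq_zero {a12 a13 a23 : ℝ} (hpos : 0 < a12 + a23)
    (htree : 0 < a12 * a13 + a12 * a23 + a13 * a23) {x : Fin 3 → ℝ}
    (hx : triangleLaplacian a12 a13 a23 *ᵥ x = 0) : x = fun _ => x 0 := by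
  have h := mul_dotProduct_triangleLaplacian_mulVec a12 a13 a23 x
  rw [hx, dotProduct_zero, mul_zero, eq_comm,
    add_eq_zero_iff_of_nonneg (sq_nonneg _) (by positivity), sq_eq_zero_iff,
    mul_eq_zero_iff_left htree.ne', sq_eq_zero_iff, sub_eq_zero] at h
  obtain ⟨h01, h02⟩ := h
  have h10 : (a12 + a23) * (x 1 - x 0) = 0 := by linear_combination -h01 - a23 * h02
  rw [mul_eq_zero_iff_left hpos.ne', sub_eq_zero] at h10
  rw [sub_eq_zero] at h02
  ext i
  fin_cases i <;> simp [h10, h02]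

theorem stmt14_general (a12 a13 a23 : ℝ)
    (hpos : 0 < a12 + a23) (h13 : -(a12 * a23) / (a12 + a23) < a13)
    (ΔW : Matrix (Fin 3) (Fin 3) ℝ)
    (hΔW : ΔW = !![a12 + a13, -a12, -a13;
                   -a12, a23 + a12, -a23;
                   -a13, -a23, a13 + a23])
    (u0 : Fin 3 → ℝ) :
    Tendsto (fun t : ℝ => NormedSpace.exp ((-t) • ΔW) *ᵥ u0) atTop
      (nhds (fun _ => (1 / 3 : ℝ) * ((fun _ => (1 : ℝ)) ⬝ᵥ u0))) := by
  have htree : 0 < a12 * a13 + a12 * a23 + a13 * a23 := by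
    linarith [(div_lt_iff₀ hpos).mp h13]
  change ΔW = triangleLaplacian a12 a13 a23 at hΔW
  subst hΔW
  set b : ℝ := (1 / 3 : ℝ) * ((fun _ => (1 : ℝ)) ⬝ᵥ u0) with hb
  have hw : ∀ x, triangleLaplacian a12 a13 a23 *ᵥ x = 0 → x ⬝ᵥ (u0 - fun _ => b) = 0 := by
    intro x hx
    rw [eq_const_of_triangleLaplacian_mulVec_eq_zero hpos htree hx]
    simp only [dotProduct, Fin.isValue, hb, one_div, one_mul, Fin.sum_univ_three, Pi.sub_apply]
    ring
  simpa using (triangleLaplacian_posSemidef hpos htree.le).tendsto_exp_neg_smul_mulVec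
    (triangleLaplacian_mulVec_const a12 a13 a23 b) hw

/-- If `a₁₂, a₂₃ ≥ 0`, `a₁₂ + a₂₃ > 0` and
`a₁₃ > −a₁₂a₂₃/(a₁₂+a₂₃)`, then for the 3×3 graph Laplacian `Δ_W` and any `u⃗₀ ∈ ℝ³`,
`exp(−Δ_W t) u⃗₀ → b(0)·𝟙` as `t → ∞`, where `b(0) = (1/3) 𝟙ᵀ u⃗₀`. -/
theorem stmt14 (a12 a13 a23 : ℝ) (h12 : 0 ≤ a12) (h23 : 0 ≤ a23)
    (hpos : 0 < a12 + a23) (h13 : -(a12 * a23) / (a12 + a23) < a13)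
    (ΔW : Matrix (Fin 3) (Fin 3) ℝ)
    (hΔW : ΔW = !![a12 + a13, -a12, -a13;
                   -a12, a23 + a12, -a23;
                   -a13, -a23, a13 + a23])
    (u0 : Fin 3 → ℝ) :
    Tendsto (fun t : ℝ => NormedSpace.exp ((-t) • ΔW) *ᵥ u0) atTop
      (nhds (fun _ => (1 / 3 : ℝ) * ((fun _ => (1 : ℝ)) ⬝ᵥ u0))) :=
  stmt14_general a12 a13 a23 hpos h13 ΔW hΔW u0
end

section
/- Let a₁₂, a₂₃ ≥ 0 with a₁₂ + a₂₃ > 0 and a₁₃ < −a₁₂a₂₃/(a₁₂+a₂₃), let Δ_W be the corresponding 3×3 graph Laplacian with eigenvalue λ₃ = a₁₂+a₁₃+a₂₃ − Δ < 0 and eigenvector v₃ = (a₂₃−a₁₂+Δ, a₁₂−a₁₃−Δ, a₁₃−a₂₃)ᵀ, and let u⃗₀ ∈ ℝ³ with v₃ᵀu⃗₀ ≠ 0. Then 𝟙ᵀ exp(−Δ_W t) u⃗₀ = 𝟙ᵀ u⃗₀ for all t (the total barycenter stays constant), while ‖exp(−Δ_W t) u⃗₀‖ → ∞ as t → ∞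 (the group barycenters diverge). -/
/-!
The all-ones vector and `v₃` are left eigenvectors of `Δ_W`, with eigenvalues `0` and `λ₃`, so
`𝟙ᵀ exp(-Δ_W t) = 𝟙ᵀ` and `v₃ᵀ exp(-Δ_W t) = e^{-λ₃ t} v₃ᵀ`. The first identity is the conservation
of the total barycenter; by the second, the linear functional `v₃ᵀ` blows up exponentially along the
trajectory when `λ₃ < 0` and `v₃ᵀ u⃗₀ ≠ 0`, which forces the trajectory itself to diverge.
-/

open Matrix Filter

noncomputable section

section

-- Any norm on matrices will do to sum the exponential series; `NormedSpace.exp` itself does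
-- not depend on it.
attribute [local instance] Matrix.linftyOpNormedAddCommGroup Matrix.linftyOpNormedRing
  Matrix.linftyOpNormedAlgebra

theorem Matrix.vecMul_exp_of_vecMul_eq_smul {m : Type*} [Fintype m] [DecidableEq m]
    {A : Matrix m m ℝ} {v : m → ℝ} {μ : ℝ} (h : v ᵥ* A = μ • v) :
    v ᵥ* NormedSpace.exp A = Real.exp μ • v := by
  have hpow (n : ℕ) : v ᵥ* (A ^ n) = μ ^ n • v := by
    induction n with
    | zero => simp
    | succ n ih => rw [pow_succ, ← vecMul_vecMul, ih, smul_vecMul, h, smul_smul, pow_succ]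
  let vecMulBy : Matrix m m ℝ →ₗ[ℝ] m → ℝ :=
    { toFun := (v ᵥ* ·)
      map_add' := fun M N => vecMul_add M N v
      map_smul' := fun c M => vecMul_smul v c M }
  have hA := (NormedSpace.exp_series_hasSum_exp' (𝕂 := ℝ) A).map vecMulBy
    (LinearMap.continuous_of_finiteDimensional _)
  have hμ := (NormedSpace.exp_series_hasSum_exp' (𝕂 := ℝ) μ).smul_const v
  rw [← Real.exp_eq_exp_ℝ] at hμ
  refine hA.unique ?_
  convert hμ using 2 with n
  simp [vecMulBy, vecMul_smul, hpow, smul_smul]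

end

theorem Matrix.dotProduct_exp_mulVec_of_vecMul_eq_smul {m : Type*} [Fintype m] [DecidableEq m]
    {A : Matrix m m ℝ} {v : m → ℝ} {μ : ℝ} (h : v ᵥ* A = μ • v) (u : m → ℝ) :
    v ⬝ᵥ (NormedSpace.exp A *ᵥ u) = Real.exp μ * (v ⬝ᵥ u) := by
  rw [dotProduct_mulVec, vecMul_exp_of_vecMul_eq_smul h, smul_dotProduct, smul_eq_mul]

theorem tendsto_norm_atTop_of_tendsto_norm_apply {α E F : Type*} [SeminormedAddCommGroup E]
    [NormedSpace ℝ E] [SeminormedAddCommGroup F] [NormedSpace ℝ F] (L : E →L[ℝ] F)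
    {l : Filter α} {x : α → E} (h : Tendsto (fun a => ‖L (x a)‖) l atTop) :
    Tendsto (fun a => ‖x a‖) l atTop := by
  refine tendsto_atTop_mono (fun a => ?_) (h.atTop_div_const (by positivity : 0 < ‖L‖ + 1))
  rw [div_le_iff₀ (by positivity)]
  nlinarith [L.le_opNorm (x a), norm_nonneg L, norm_nonneg (x a)]

def laplacian3 (a12 a13 a23 : ℝ) : Matrix (Fin 3) (Fin 3) ℝ :=
  !![a12 + a13, -a12, -a13;
     -a12, a23 + a12, -a23;
     -a13, -a23, a13 + a23]

theorem one_vecMul_laplacian3 (a12 a13 a23 : ℝ) :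
    (fun _ => (1 : ℝ)) ᵥ* laplacian3 a12 a13 a23 = 0 := by
  ext j
  fin_cases j <;> simp [laplacian3, vecMul, dotProduct, Fin.sum_univ_three]
  ring

theorem vecMul_laplacian3_eq_smul {a12 a13 a23 Δ : ℝ}
    (hΔ : Δ ^ 2 = ((a12 - a13) ^ 2 + (a12 - a23) ^ 2 + (a13 - a23) ^ 2) / 2) :
    ![a23 - a12 + Δ, a12 - a13 - Δ, a13 - a23] ᵥ* laplacian3 a12 a13 a23 =
      (a12 + a13 + a23 - Δ) • ![a23 - a12 + Δ, a12 - a13 - Δ, a13 - a23] := by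
  ext j
  fin_cases j <;> simp [laplacian3, vecMul, dotProduct, Fin.sum_univ_three]
  · linear_combination hΔ
  · linear_combination -hΔ
  · ring

theorem stmt16_general (a12 a13 a23 : ℝ)
    (ΔW : Matrix (Fin 3) (Fin 3) ℝ)
    (hΔW : ΔW = !![a12 + a13, -a12, -a13;
                   -a12, a23 + a12, -a23;
                   -a13, -a23, a13 + a23])
    (Δ : ℝ)
    (hΔ : Δ = Real.sqrt ((a12 - a13) ^ 2 + (a12 - a23) ^ 2 + (a13 - a23) ^ 2) /
      Real.sqrt 2)
    (hlam3 : a12 + a13 + a23 - Δ < 0)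
    (v₃ : Fin 3 → ℝ)
    (hv₃ : v₃ = ![a23 - a12 + Δ, a12 - a13 - Δ, a13 - a23])
    (u0 : Fin 3 → ℝ) (hu0 : v₃ ⬝ᵥ u0 ≠ 0) :
    (∀ t : ℝ, (fun _ => (1 : ℝ)) ⬝ᵥ (NormedSpace.exp ((-t) • ΔW) *ᵥ u0) =
      (fun _ => (1 : ℝ)) ⬝ᵥ u0) ∧
    Tendsto (fun t : ℝ => ‖NormedSpace.exp ((-t) • ΔW) *ᵥ u0‖) atTop atTop := by
  have hΔsq : Δ ^ 2 = ((a12 - a13) ^ 2 + (a12 - a23) ^ 2 + (a13 - a23) ^ 2) / 2 := by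
    rw [hΔ, div_pow, Real.sq_sqrt (by positivity), Real.sq_sqrt zero_le_two]
  have hones : (fun _ => (1 : ℝ)) ᵥ* ΔW = (0 : ℝ) • fun _ => 1 := by
    rw [hΔW, zero_smul]
    exact one_vecMul_laplacian3 a12 a13 a23
  have hv₃eig : v₃ ᵥ* ΔW = (a12 + a13 + a23 - Δ) • v₃ := by
    rw [hΔW, hv₃]
    exact vecMul_laplacian3_eq_smul hΔsq
  have hflow {v : Fin 3 → ℝ} {μ : ℝ} (hv : v ᵥ* ΔW = μ • v) (t : ℝ) :
      v ⬝ᵥ (NormedSpace.exp ((-t) • ΔW) *ᵥ u0) = Real.exp (-t * μ) * (v ⬝ᵥ u0) :=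
    dotProduct_exp_mulVec_of_vecMul_eq_smul (by rw [vecMul_smul, hv, smul_smul]) u0
  refine ⟨fun t => by simpa using hflow hones t, ?_⟩
  refine tendsto_norm_atTop_of_tendsto_norm_apply
    (LinearMap.toContinuousLinearMap (dotProductBilin ℝ ℝ v₃)) ?_
  simp only [LinearMap.coe_toContinuousLinearMap', dotProductBilin_apply_apply, hflow hv₃eig,
    norm_mul, Real.norm_eq_abs, Real.abs_exp]
  have hrate : Tendsto (fun t : ℝ => -t * (a12 + a13 + a23 - Δ)) atTop atTop := by
    simpa only [neg_mul_comm, id] using tendsto_id.atTop_mul_const (neg_pos.2 hlam3)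
  exact (Real.tendsto_exp_atTop.comp hrate).atTop_mul_const (abs_pos.2 hu0)

/-- If `a₁₂, a₂₃ ≥ 0`, `a₁₂ + a₂₃ > 0`, `a₁₃ < −a₁₂a₂₃/(a₁₂+a₂₃)`
(so that `λ₃ = a₁₂+a₁₃+a₂₃ − Δ < 0`), and `u⃗₀ ∈ ℝ³` has `v₃ᵀu⃗₀ ≠ 0`, then the total
barycenter `𝟙ᵀ exp(−Δ_W t) u⃗₀` is constant in `t`, while `‖exp(−Δ_W t) u⃗₀‖ → ∞` as
`t → ∞`. -/
theorem stmt16 (a12 a13 a23 : ℝ) (h12 : 0 ≤ a12) (h23 : 0 ≤ a23)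
    (hpos : 0 < a12 + a23) (h13 : a13 < -(a12 * a23) / (a12 + a23))
    (ΔW : Matrix (Fin 3) (Fin 3) ℝ)
    (hΔW : ΔW = !![a12 + a13, -a12, -a13;
                   -a12, a23 + a12, -a23;
                   -a13, -a23, a13 + a23])
    (Δ : ℝ)
    (hΔ : Δ = Real.sqrt ((a12 - a13) ^ 2 + (a12 - a23) ^ 2 + (a13 - a23) ^ 2) /
      Real.sqrt 2)
    (hlam3 : a12 + a13 + a23 - Δ < 0)
    (v₃ : Fin 3 → ℝ)
    (hv₃ : v₃ = ![a23 - a12 + Δ, a12 - a13 - Δ, a13 - a23])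
    (u0 : Fin 3 → ℝ) (hu0 : v₃ ⬝ᵥ u0 ≠ 0) :
    (∀ t : ℝ, (fun _ => (1 : ℝ)) ⬝ᵥ (NormedSpace.exp ((-t) • ΔW) *ᵥ u0) =
      (fun _ => (1 : ℝ)) ⬝ᵥ u0) ∧
    Tendsto (fun t : ℝ => ‖NormedSpace.exp ((-t) • ΔW) *ᵥ u0‖) atTop atTop :=
  stmt16_general a12 a13 a23 ΔW hΔW Δ hΔ hlam3 v₃ hv₃ u0 hu0
end
end
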